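/- arXiv:2305.02535 — 3 statements merged into one kernel-verified Lean document; each statement's English description precedes it below -/
import Mathlib

section
/- Let A ∈ ℝ^{n×n}, ε ∈ (0,1), and Ã = A + D with ‖D‖_2 ≤ (ε/(3n))·σ_{k+1}(A). Let Q ∈ ℝ^{n×k} have orthonormal columns q_1,…,q_k. If for some i ∈ {1,…,k} it holds that |q_iᵀÃÃᵀq_i − σ_i(Ã)²| ≤ ε·σ_{k+1}(Ã)², then |q_iᵀAAᵀq_i − σ_i(A)²| ≤ 8ε·σ_i(A)². -/
open MeasureTheory ProbabilityTheory Matrix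

noncomputable section

/-- Euclidean (ℓ₂) norm of a vector. -/
def l2norm {n : ℕ} (v : Fin n → ℝ) : ℝ := Real.sqrt (∑ i, v i ^ 2)

/-- Spectral (ℓ₂ operator) norm of a matrix. -/
def specNorm {n d : ℕ} (M : Matrix (Fin n) (Fin d) ℝ) : ℝ :=
  sSup {c : ℝ | ∃ v : Fin d → ℝ, l2norm v ≤ 1 ∧ c = l2norm (M.mulVec v)}

/-- Frobenius norm of a matrix. -/
def frobNorm {n d : ℕ} (M : Matrix (Fin n) (Fin d) ℝ) : ℝ :=
  Real.sqrt (∑ i, ∑ j, M i j ^ 2)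

/-- Column span of a matrix. -/
def colSpan {n : ℕ} {m : Type*} (M : Matrix (Fin n) m ℝ) : Submodule ℝ (Fin n → ℝ) :=
  Submodule.span ℝ (Set.range fun j i => M i j)

/-- `IsSVD A U V σ` : `A = U Σ Vᵀ` is a singular value decomposition of `A`, where
`σ 0 ≥ σ 1 ≥ … ≥ 0` are the singular values (0-indexed, `σ i = 0` for `i ≥ min n d`). -/
def IsSVD {n d : ℕ} (A : Matrix (Fin n) (Fin d) ℝ) (U : Matrix (Fin n) (Fin n) ℝ)
    (V : Matrix (Fin d) (Fin d) ℝ) (σ : ℕ → ℝ) : Prop :=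
  Uᵀ * U = 1 ∧ Vᵀ * V = 1 ∧
  (∀ i j : ℕ, i ≤ j → σ j ≤ σ i) ∧ (∀ i, 0 ≤ σ i) ∧
  (∀ i, min n d ≤ i → σ i = 0) ∧
  A = U * (Matrix.of fun (i : Fin n) (j : Fin d) => if (i : ℕ) = (j : ℕ) then σ (i : ℕ) else 0) * Vᵀ

/-- The first `k` columns of a square matrix `U` (e.g. the top-`k` left singular vectors). -/
def topCols {n k : ℕ} (U : Matrix (Fin n) (Fin n) ℝ) (hk : k ≤ n) :
    Matrix (Fin n) (Fin k) ℝ :=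
  Matrix.of fun i j => U i (Fin.castLE hk j)

/-- The best rank-`k` approximation `A_k = U_k U_kᵀ A` of `A`. -/
def rankApprox {n d : ℕ} (k : ℕ) (A : Matrix (Fin n) (Fin d) ℝ)
    (U : Matrix (Fin n) (Fin n) ℝ) (hk : k ≤ n) : Matrix (Fin n) (Fin d) ℝ :=
  topCols U hk * (topCols U hk)ᵀ * A

/-- The law of a vector in `ℝⁿ` with i.i.d. standard Gaussian entries. -/
def stdGaussian (n : ℕ) : Measure (Fin n → ℝ) :=
  Measure.pi fun _ => gaussianReal 0 1

/-- The law of an `n × b` matrix with i.i.d. standard Gaussian entries. -/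
def stdGaussianMat (n b : ℕ) : Measure (Fin n → Fin b → ℝ) :=
  Measure.pi fun _ => Measure.pi fun _ => gaussianReal 0 1

/-- `U'` consists of `k` top (unit-norm, mutually orthogonal) eigenvectors of the symmetric
matrix `M`: the first `k` columns of an orthogonal eigenbasis whose eigenvalues are sorted
in decreasing order. -/
def IsTopEigenvectors {m k : ℕ} (M : Matrix (Fin m) (Fin m) ℝ)
    (U' : Matrix (Fin m) (Fin k) ℝ) : Prop :=
  ∃ (W : Matrix (Fin m) (Fin m) ℝ) (μ : Fin m → ℝ) (hk : k ≤ m),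
    Wᵀ * W = 1 ∧ (∀ i j : Fin m, i ≤ j → μ j ≤ μ i) ∧
    M = W * Matrix.diagonal μ * Wᵀ ∧
    U' = Matrix.of fun i j => W i (Fin.castLE hk j)

/-- `Q` is a possible output of the single vector Krylov method (Algorithm 1) on `A` with
target rank `k`, starting vector `x` and `t` iterations. -/
def IsKrylovOutput {n d k : ℕ} (A : Matrix (Fin n) (Fin d) ℝ) (t : ℕ)
    (x : Fin n → ℝ) (Q : Matrix (Fin n) (Fin k) ℝ) : Prop :=
  ∃ (m : ℕ) (Z : Matrix (Fin n) (Fin m) ℝ) (U' : Matrix (Fin m) (Fin k) ℝ),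
    Zᵀ * Z = 1 ∧
    colSpan Z = Submodule.span ℝ
      {v : Fin n → ℝ | ∃ j ≤ t, v = ((A * Aᵀ) ^ j).mulVec x} ∧
    IsTopEigenvectors (Zᵀ * (A * Aᵀ) * Z) U' ∧
    Q = Z * U'

/-- `Q` is a possible output of the block Krylov method (Algorithm 2) on `A` with
target rank `k`, starting block `B` and `t` iterations. -/
def IsBlockKrylovOutput {n d k b : ℕ} (A : Matrix (Fin n) (Fin d) ℝ) (t : ℕ)
    (B : Matrix (Fin n) (Fin b) ℝ) (Q : Matrix (Fin n) (Fin k) ℝ) : Prop :=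
  ∃ (m : ℕ) (Z : Matrix (Fin n) (Fin m) ℝ) (U' : Matrix (Fin m) (Fin k) ℝ),
    Zᵀ * Z = 1 ∧
    colSpan Z = Submodule.span ℝ
      {v : Fin n → ℝ | ∃ j ≤ t, ∃ c : Fin b, v = ((A * Aᵀ) ^ j).mulVec (fun i => B i c)} ∧
    IsTopEigenvectors (Zᵀ * (A * Aᵀ) * Z) U' ∧
    Q = Z * U'

/-- `Q` is a possible output of single vector simultaneous iteration on `A` with
target rank `k`, starting vector `x`, `t` iterations, and memory budget `ℓ`. -/
def IsSimIterOutput {n d k : ℕ} (A : Matrix (Fin n) (Fin d) ℝ) (t ℓ : ℕ)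
    (x : Fin n → ℝ) (Q : Matrix (Fin n) (Fin k) ℝ) : Prop :=
  ∃ (m : ℕ) (Z : Matrix (Fin n) (Fin m) ℝ) (U' : Matrix (Fin m) (Fin k) ℝ),
    Zᵀ * Z = 1 ∧
    colSpan Z = Submodule.span ℝ
      {v : Fin n → ℝ | ∃ j, t - ℓ + 1 ≤ j ∧ j ≤ t ∧ v = ((A * Aᵀ) ^ j).mulVec x} ∧
    IsTopEigenvectors (Zᵀ * (A * Aᵀ) * Z) U' ∧
    Q = Z * U'

/-- `B` is a `(k,L)`-good starting matrix for a matrix with top-`k` left singular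
vectors `Uk` (Definition 2.1 / `def:lgood`). -/
def IsGoodStart {n k : ℕ} (Uk : Matrix (Fin n) (Fin k) ℝ)
    (B : Matrix (Fin n) (Fin k) ℝ) (L : ℝ) : Prop :=
  ∃ Q : Matrix (Fin n) (Fin k) ℝ, Qᵀ * Q = 1 ∧ colSpan Q = colSpan B ∧
    IsUnit (Ukᵀ * Q) ∧ specNorm ((Ukᵀ * Q)⁻¹) ^ 2 ≤ L

/-- Generalized `(k,L)`-good starting matrix (Definition `def:lgood-small-block`):
`B` may have any number of columns; some orthonormal `Q` with columns inside the column
span of `B` has `UkᵀQ` invertible with `‖(UkᵀQ)⁻¹‖₂² ≤ L`. -/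
def IsGoodStartGen {n k : ℕ} {m : Type*} [Fintype m] (Uk : Matrix (Fin n) (Fin k) ℝ)
    (B : Matrix (Fin n) m ℝ) (L : ℝ) : Prop :=
  ∃ Q : Matrix (Fin n) (Fin k) ℝ, Qᵀ * Q = 1 ∧
    (∀ j : Fin k, (fun i => Q i j) ∈ colSpan B) ∧
    IsUnit (Ukᵀ * Q) ∧ specNorm ((Ukᵀ * Q)⁻¹) ^ 2 ≤ L

/-- Schatten `p`-norm of a matrix: `(∑ i σ_i(M)^p)^(1/p)`, where the singular values are
the square roots of the eigenvalues of `M Mᵀ`. -/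
def schattenNorm {n d : ℕ} (M : Matrix (Fin n) (Fin d) ℝ) (p : ℝ) : ℝ :=
  (∑ i, Real.sqrt ((Matrix.isHermitian_mul_conjTranspose_self M).eigenvalues i) ^ p) ^ (1 / p)


/-!
Write `q` for the `i`-th column of `Q`, so that `qᵀMMᵀq = ‖Mᵀq‖²`. Replacing `Ã` by `A` moves
`‖Ãᵀq‖` by at most `‖D‖₂`, and by Weyl's inequality it moves every singular value by at most
`‖D‖₂` as well. Since `‖D‖₂ ≤ ε σ_i(A) / 3` and `σ_{k+1}(Ã) ≤ 4 σ_i(A) / 3`, the three errors in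
`‖Aᵀq‖² - σ_i(A)²` add up to at most `4 ε σ_i(A)²`.
-/

open scoped Matrix.Norms.L2Operator

section L2Norm

variable {n d : ℕ}

lemma l2norm_eq_norm_toLp (v : Fin n → ℝ) : l2norm v = ‖WithLp.toLp 2 v‖ := by
  simp [l2norm, EuclideanSpace.norm_eq, sq_abs]

lemma l2norm_nonneg (v : Fin n → ℝ) : 0 ≤ l2norm v := Real.sqrt_nonneg _

lemma l2norm_pos {v : Fin n → ℝ} (hv : v ≠ 0) : 0 < l2norm v := by
  simpa [l2norm_eq_norm_toLp] using hv

lemma l2norm_sq (v : Fin n → ℝ) : l2norm v ^ 2 = v ⬝ᵥ v := by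
  rw [l2norm, Real.sq_sqrt (by positivity)]
  simp [dotProduct, sq]

lemma l2norm_sq_eq_sum (v : Fin n → ℝ) : l2norm v ^ 2 = ∑ i, v i ^ 2 :=
  Real.sq_sqrt (by positivity)

lemma specNorm_eq_l2_opNorm (M : Matrix (Fin n) (Fin d) ℝ) : specNorm M = ‖M‖ := by
  rw [specNorm, l2_opNorm_def, ← ContinuousLinearMap.sSup_unitClosedBall_eq_norm]
  congr 1
  ext c
  simp only [l2norm_eq_norm_toLp, Set.mem_ofPred_eq, Set.mem_image, Metric.mem_closedBall,
    dist_zero_right, eq_comm (a := c)]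
  exact ⟨fun ⟨v, hv, h⟩ => ⟨WithLp.toLp 2 v, hv, h⟩, fun ⟨x, hx, h⟩ => ⟨x.ofLp, hx, h⟩⟩

lemma specNorm_nonneg (M : Matrix (Fin n) (Fin d) ℝ) : 0 ≤ specNorm M := by
  rw [specNorm_eq_l2_opNorm]
  exact norm_nonneg M

lemma specNorm_transpose (M : Matrix (Fin n) (Fin d) ℝ) : specNorm Mᵀ = specNorm M := by
  rw [specNorm_eq_l2_opNorm, specNorm_eq_l2_opNorm, ← conjTranspose_eq_transpose_of_trivial,
    l2_opNorm_conjTranspose]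

lemma specNorm_sub_comm (M N : Matrix (Fin n) (Fin d) ℝ) :
    specNorm (M - N) = specNorm (N - M) := by
  rw [specNorm_eq_l2_opNorm, specNorm_eq_l2_opNorm, norm_sub_rev]

lemma abs_l2norm_mulVec_sub_le (M N : Matrix (Fin n) (Fin d) ℝ) (v : Fin d → ℝ) :
    |l2norm (M *ᵥ v) - l2norm (N *ᵥ v)| ≤ specNorm (M - N) * l2norm v := by
  rw [l2norm_eq_norm_toLp, l2norm_eq_norm_toLp, l2norm_eq_norm_toLp, specNorm_eq_l2_opNorm]
  refine (abs_norm_sub_norm_le _ _).trans ?_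
  simpa [← WithLp.toLp_sub, sub_mulVec] using (M - N).l2_opNorm_mulVec (WithLp.toLp 2 v)

lemma l2norm_mulVec_eq_of_transpose_mul_self {U : Matrix (Fin n) (Fin d) ℝ} (hU : Uᵀ * U = 1)
    (v : Fin d → ℝ) : l2norm (U *ᵥ v) = l2norm v := by
  refine (pow_left_inj₀ (l2norm_nonneg _) (l2norm_nonneg _) two_ne_zero).1 ?_
  rw [l2norm_sq, l2norm_sq, dotProduct_mulVec, ← vecMul_transpose, vecMul_vecMul, hU, vecMul_one]

lemma l2norm_col_eq_one_of_transpose_mul_self {U : Matrix (Fin n) (Fin d) ℝ} (hU : Uᵀ * U = 1)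
    (j : Fin d) : l2norm (U.col j) = 1 := by
  rw [← mulVec_single_one, l2norm_mulVec_eq_of_transpose_mul_self hU, l2norm]
  simp [Pi.single_apply]

lemma dotProduct_mul_transpose_mulVec (M : Matrix (Fin n) (Fin d) ℝ) (v : Fin n → ℝ) :
    v ⬝ᵥ ((M * Mᵀ) *ᵥ v) = l2norm (Mᵀ *ᵥ v) ^ 2 := by
  rw [l2norm_sq, ← mulVec_mulVec, dotProduct_mulVec, mulVec_transpose]

end L2Norm

theorem Submodule.inf_ne_bot_of_finrank_lt_add {K W : Type*} [DivisionRing K] [AddCommGroup W]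
    [Module K W] [FiniteDimensional K W] {S T : Submodule K W}
    (h : Module.finrank K W < Module.finrank K S + Module.finrank K T) : S ⊓ T ≠ ⊥ := by
  intro hbot
  have hsum := Submodule.finrank_sup_add_finrank_inf_eq S T
  rw [hbot, finrank_bot, add_zero] at hsum
  have := Submodule.finrank_le (S ⊔ T)
  omega

section Columns

variable {m ι : Type*} [Fintype m] [DecidableEq ι] {V : Matrix m ι ℝ}

lemma finrank_span_image_col [Fintype ι] (hV : Vᵀ * V = 1) (s : Finset ι) :
    Module.finrank ℝ (Submodule.span ℝ (V.col '' s)) = s.card := by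
  have hV : LinearIndependent ℝ V.col := mulVec_injective_iff.1 fun x y hxy => by
    simpa [mulVec_mulVec, hV] using congrArg (Vᵀ *ᵥ ·) hxy
  rw [Set.image_eq_range]
  exact (finrank_span_eq_card (hV.comp _ Subtype.val_injective)).trans (by simp)

lemma transpose_mulVec_apply_eq_zero_of_mem_span_col (hV : Vᵀ * V = 1) {s : Set ι} {v : m → ℝ}
    (hv : v ∈ Submodule.span ℝ (V.col '' s)) {l : ι} (hl : l ∉ s) : (Vᵀ *ᵥ v) l = 0 := by
  suffices Submodule.span ℝ (V.col '' s) ≤ LinearMap.ker ((LinearMap.proj l).comp Vᵀ.mulVecLin) from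
    this hv
  rw [Submodule.span_le]
  rintro _ ⟨j, hj, rfl⟩
  show (Vᵀ *ᵥ V.col j) l = 0
  have : (Vᵀ *ᵥ V.col j) l = (Vᵀ * V) l j := by simp [mulVec, mul_apply, dotProduct]
  rw [this, hV, one_apply_ne (ne_of_mem_of_not_mem hj hl).symm]

end Columns

namespace IsSVD

variable {n : ℕ} {A B U V U' V' : Matrix (Fin n) (Fin n) ℝ} {σ τ : ℕ → ℝ}

lemma nonneg (hA : IsSVD A U V σ) (j : ℕ) : 0 ≤ σ j := hA.2.2.2.1 j

lemma antitone (hA : IsSVD A U V σ) : Antitone σ := fun i j hij => hA.2.2.1 i j hij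

lemma eq_zero_of_le (hA : IsSVD A U V σ) {j : ℕ} (hj : n ≤ j) : σ j = 0 :=
  hA.2.2.2.2.1 j (by simpa using hj)

lemma eq_mul_diagonal_mul (hA : IsSVD A U V σ) : A = U * diagonal (fun i : Fin n => σ i) * Vᵀ := by
  rw [hA.2.2.2.2.2]
  congr
  ext i j
  simp [Fin.val_inj]

lemma l2norm_mulVec_sq (hA : IsSVD A U V σ) (v : Fin n → ℝ) :
    l2norm (A *ᵥ v) ^ 2 = ∑ l : Fin n, σ l ^ 2 * (Vᵀ *ᵥ v) l ^ 2 := by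
  rw [hA.eq_mul_diagonal_mul, ← mulVec_mulVec, ← mulVec_mulVec,
    l2norm_mulVec_eq_of_transpose_mul_self hA.1, l2norm_sq_eq_sum]
  simp [mulVec_diagonal, mul_pow]

lemma sq_mul_l2norm_eq (hA : IsSVD A U V σ) (j : ℕ) (v : Fin n → ℝ) :
    (σ j * l2norm v) ^ 2 = ∑ l : Fin n, σ j ^ 2 * (Vᵀ *ᵥ v) l ^ 2 := by
  have hVt : Vᵀᵀ * Vᵀ = 1 := by rw [transpose_transpose, mul_eq_one_comm.mp hA.2.1]
  rw [mul_pow, ← l2norm_mulVec_eq_of_transpose_mul_self hVt, l2norm_sq_eq_sum, Finset.mul_sum]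

lemma mul_l2norm_le_l2norm_mulVec (hA : IsSVD A U V σ) {j : Fin n} {v : Fin n → ℝ}
    (hv : v ∈ Submodule.span ℝ (V.col '' Finset.Iic j)) :
    σ j * l2norm v ≤ l2norm (A *ᵥ v) := by
  refine (pow_le_pow_iff_left₀ (mul_nonneg (hA.nonneg j) (l2norm_nonneg v)) (l2norm_nonneg _)
    two_ne_zero).1 ?_
  rw [hA.sq_mul_l2norm_eq, hA.l2norm_mulVec_sq]
  refine Finset.sum_le_sum fun l _ => ?_
  by_cases hl : l ≤ j
  · gcongr
    · exact hA.nonneg j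
    · exact hA.antitone (by simpa using hl)
  · rw [transpose_mulVec_apply_eq_zero_of_mem_span_col hA.2.1 hv (by simpa using hl)]
    simp

lemma l2norm_mulVec_le_mul_l2norm (hA : IsSVD A U V σ) {j : Fin n} {v : Fin n → ℝ}
    (hv : v ∈ Submodule.span ℝ (V.col '' Finset.Ici j)) :
    l2norm (A *ᵥ v) ≤ σ j * l2norm v := by
  refine (pow_le_pow_iff_left₀ (l2norm_nonneg _) (mul_nonneg (hA.nonneg j) (l2norm_nonneg v))
    two_ne_zero).1 ?_
  rw [hA.sq_mul_l2norm_eq, hA.l2norm_mulVec_sq]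
  refine Finset.sum_le_sum fun l _ => ?_
  by_cases hl : j ≤ l
  · gcongr
    · exact hA.nonneg l
    · exact hA.antitone (by simpa using hl)
  · rw [transpose_mulVec_apply_eq_zero_of_mem_span_col hA.2.1 hv (by simpa using hl)]
    simp

theorem le_add_specNorm_sub (hA : IsSVD A U V σ) (hB : IsSVD B U' V' τ) (j : ℕ) :
    τ j ≤ σ j + specNorm (B - A) := by
  rcases le_or_gt n j with hj | hj
  · rw [hB.eq_zero_of_le hj]
    exact add_nonneg (hA.nonneg j) (specNorm_nonneg _)
  set j' : Fin n := ⟨j, hj⟩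
  -- Courant–Fischer: the top `j + 1` right singular vectors of `B` and the bottom `n - j` of `A`
  -- span subspaces whose dimensions add up to more than `n`.
  have hdim : Module.finrank ℝ (Fin n → ℝ) <
      Module.finrank ℝ (Submodule.span ℝ (V'.col '' Finset.Iic j')) +
        Module.finrank ℝ (Submodule.span ℝ (V.col '' Finset.Ici j')) := by
    rw [finrank_span_image_col hB.2.1, finrank_span_image_col hA.2.1, Fin.card_Iic, Fin.card_Ici,
      Module.finrank_fin_fun]
    omega
  obtain ⟨v, ⟨hv₁, hv₂⟩, hv⟩ :=
    Submodule.exists_mem_ne_zero_of_ne_bot (Submodule.inf_ne_bot_of_finrank_lt_add hdim)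
  have hpert := (abs_le.1 (abs_l2norm_mulVec_sub_le B A v)).2
  have hlow := hB.mul_l2norm_le_l2norm_mulVec hv₁
  have hup := hA.l2norm_mulVec_le_mul_l2norm hv₂
  refine le_of_mul_le_mul_right ?_ (l2norm_pos hv)
  linarith

theorem abs_sub_le_specNorm_sub (hA : IsSVD A U V σ) (hB : IsSVD B U' V' τ) (j : ℕ) :
    |τ j - σ j| ≤ specNorm (B - A) := by
  have h₁ := hA.le_add_specNorm_sub hB j
  have h₂ := hB.le_add_specNorm_sub hA j
  rw [specNorm_sub_comm] at h₂
  exact abs_sub_le_iff.2 ⟨by linarith, by linarith⟩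

end IsSVD

lemma abs_sq_sub_sq_le {x y δ : ℝ} (hy : 0 ≤ y) (h : |x - y| ≤ δ) :
    |x ^ 2 - y ^ 2| ≤ δ * (δ + 2 * y) := by
  have hδ : 0 ≤ δ := (abs_nonneg _).trans h
  calc |x ^ 2 - y ^ 2| = |x - y| * |x - y + 2 * y| := by rw [← abs_mul]; ring_nf
    _ ≤ δ * (δ + 2 * y) := by
      gcongr
      calc |x - y + 2 * y| ≤ |x - y| + |2 * y| := abs_add_le _ _
        _ ≤ δ + 2 * y := by rw [abs_of_nonneg (a := 2 * y) (by linarith)]; linarith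

lemma abs_sq_sub_sq_le_of_perturbed {ε δ s s' τ a a' : ℝ} (hε₀ : 0 ≤ ε) (hε₁ : ε < 1)
    (hs : 0 ≤ s) (hδ : δ ≤ ε / 3 * s) (ha : |a' - a| ≤ δ) (ha' : 0 ≤ a') (hs' : |s' - s| ≤ δ)
    (hτ : τ ≤ s + δ) (hτ₀ : 0 ≤ τ) (h : |a' ^ 2 - s' ^ 2| ≤ ε * τ ^ 2) :
    |a ^ 2 - s ^ 2| ≤ 8 * ε * s ^ 2 := by
  have hδ₀ : 0 ≤ δ := (abs_nonneg _).trans ha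
  have hδs : δ ≤ s / 3 := hδ.trans (by nlinarith)
  have hετ : ε * τ ^ 2 ≤ ε * (16 / 9 * s ^ 2) := by gcongr; nlinarith
  have hs'δ : s' ^ 2 ≤ (s + δ) ^ 2 := by
    obtain ⟨h₁, h₂⟩ := abs_le.1 hs'
    exact pow_le_pow_left₀ (by linarith) (by linarith) 2
  have ha's : a' ≤ 2 * s := by
    refine (pow_le_pow_iff_left₀ ha' (by positivity) two_ne_zero).1 ?_
    nlinarith [(abs_le.1 h).2]
  have h₁ := abs_sq_sub_sq_le ha' (abs_sub_comm a' a ▸ ha)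
  have h₂ := abs_sq_sub_sq_le hs hs'
  calc |a ^ 2 - s ^ 2| ≤ |a ^ 2 - a' ^ 2| + (|a' ^ 2 - s' ^ 2| + |s' ^ 2 - s ^ 2|) :=
        (abs_sub_le _ _ _).trans (by gcongr; exact abs_sub_le _ _ _)
    _ ≤ δ * (δ + 2 * a') + (ε * (16 / 9 * s ^ 2) + δ * (δ + 2 * s)) := by
        gcongr
        exact h.trans hετ
    _ ≤ 8 * ε * s ^ 2 := by nlinarith [mul_le_mul_of_nonneg_left ha's hδ₀,
        mul_le_mul_of_nonneg_left hδs hδ₀, mul_le_mul_of_nonneg_right hδ hs]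

theorem perturbed_singular_value_guarantee_general (n k : ℕ) (hkn : k ≤ n)
    (A D : Matrix (Fin n) (Fin n) ℝ) (ε : ℝ) (hε : ε ∈ Set.Ioo (0 : ℝ) 1)
    (UA VA : Matrix (Fin n) (Fin n) ℝ) (σA : ℕ → ℝ) (hA : IsSVD A UA VA σA)
    (Ut Vt : Matrix (Fin n) (Fin n) ℝ) (σt : ℕ → ℝ) (ht : IsSVD (A + D) Ut Vt σt)
    (hD : specNorm D ≤ ε / (3 * n) * σA k)
    (Q : Matrix (Fin n) (Fin k) ℝ) (hQ : Qᵀ * Q = 1) (i : Fin k)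
    (hi : |(fun r => Q r i) ⬝ᵥ (((A + D) * (A + D)ᵀ).mulVec fun r => Q r i) - σt (i : ℕ) ^ 2|
        ≤ ε * σt k ^ 2) :
    |(fun r => Q r i) ⬝ᵥ ((A * Aᵀ).mulVec fun r => Q r i) - σA (i : ℕ) ^ 2|
      ≤ 8 * ε * σA (i : ℕ) ^ 2 := by
  obtain ⟨hε₀, hε₁⟩ := hε
  have hq : l2norm (Q.col i) = 1 := l2norm_col_eq_one_of_transpose_mul_self hQ i
  have hik : (i : ℕ) ≤ k := i.is_lt.le
  have hn : (1 : ℝ) ≤ n := by exact_mod_cast i.pos.trans_le hkn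
  have hδ : specNorm D ≤ ε / 3 * σA i :=
    calc specNorm D ≤ ε / (3 * n) * σA k := hD
      _ ≤ ε / 3 * σA k := by gcongr; exacts [hA.nonneg k, by linarith]
      _ ≤ ε / 3 * σA i := by gcongr; exact hA.antitone hik
  have hτ : σt k ≤ σA i + specNorm D :=
    calc σt k ≤ σA k + specNorm D := by simpa using hA.le_add_specNorm_sub ht k
      _ ≤ σA i + specNorm D := by gcongr; exact hA.antitone hik
  have ha : |l2norm ((A + D)ᵀ *ᵥ Q.col i) - l2norm (Aᵀ *ᵥ Q.col i)| ≤ specNorm D := by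
    simpa [hq, transpose_add, specNorm_transpose] using
      abs_l2norm_mulVec_sub_le (A + D)ᵀ Aᵀ (Q.col i)
  have hs := hA.abs_sub_le_specNorm_sub ht i
  rw [add_sub_cancel_left] at hs
  rw [show (fun r => Q r i) = Q.col i from rfl, dotProduct_mul_transpose_mulVec] at hi ⊢
  exact abs_sq_sub_sq_le_of_perturbed hε₀.le hε₁ (hA.nonneg _) hδ ha (l2norm_nonneg _) hs hτ
    (ht.nonneg _) hi

/-- Lemma `lem:perturbed-correctness`, part 1: if `Ã = A + D` with
`‖D‖₂ ≤ (ε/(3n))·σ_{k+1}(A)` and `Q` has orthonormal columns, then the singular value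
guarantee for `Ã` transfers to `A`:
`|q_iᵀÃÃᵀq_i - σ_i(Ã)²| ≤ ε·σ_{k+1}(Ã)²` implies `|q_iᵀAAᵀq_i - σ_i(A)²| ≤ 8ε·σ_i(A)²`.
Singular values are given by SVD witnesses (0-indexed: `σ (i-1)` is `σ_i`). -/
theorem perturbed_singular_value_guarantee (n k : ℕ) (hk : 1 ≤ k) (hkn : k ≤ n)
    (A D : Matrix (Fin n) (Fin n) ℝ) (ε : ℝ) (hε : ε ∈ Set.Ioo (0 : ℝ) 1)
    (UA VA : Matrix (Fin n) (Fin n) ℝ) (σA : ℕ → ℝ) (hA : IsSVD A UA VA σA)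
    (Ut Vt : Matrix (Fin n) (Fin n) ℝ) (σt : ℕ → ℝ) (ht : IsSVD (A + D) Ut Vt σt)
    (hD : specNorm D ≤ ε / (3 * n) * σA k)
    (Q : Matrix (Fin n) (Fin k) ℝ) (hQ : Qᵀ * Q = 1) (i : Fin k)
    (hi : |(fun r => Q r i) ⬝ᵥ (((A + D) * (A + D)ᵀ).mulVec fun r => Q r i) - σt (i : ℕ) ^ 2|
        ≤ ε * σt k ^ 2) :
    |(fun r => Q r i) ⬝ᵥ ((A * Aᵀ).mulVec fun r => Q r i) - σA (i : ℕ) ^ 2|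
      ≤ 8 * ε * σA (i : ℕ) ^ 2 :=
  perturbed_singular_value_guarantee_general n k hkn A D ε hε UA VA σA hA Ut Vt σt ht hD Q hQ i hi

end
end

section
/- Let A ∈ ℝ^{n×n}, ε ∈ (0,1), and Ã = A + D with ‖D‖_2 ≤ (ε/(3n))·σ_{k+1}(A). Let Q ∈ ℝ^{n×k} have orthonormal columns. If ‖Ã − QQᵀÃ‖_F ≤ (1+ε)·‖Ã − Ã_k‖_F, then ‖A − QQᵀA‖_F ≤ (1+4ε)·‖A − A_k‖_F. -/
open MeasureTheory ProbabilityTheory Matrix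

noncomputable section

-- ===== Auxiliary lemmas =====
namespace Aux

/-- Matrix as a point of Euclidean space. -/
def toEuc {n d : ℕ} (M : Matrix (Fin n) (Fin d) ℝ) : EuclideanSpace ℝ (Fin n × Fin d) :=
  (WithLp.equiv 2 _).symm (fun p => M p.1 p.2)

lemma toEuc_add {n d : ℕ} (M N : Matrix (Fin n) (Fin d) ℝ) :
    toEuc (M + N) = toEuc M + toEuc N := rfl

lemma toEuc_sub {n d : ℕ} (M N : Matrix (Fin n) (Fin d) ℝ) :
    toEuc (M - N) = toEuc M - toEuc N := rfl

lemma frobNorm_eq_norm {n d : ℕ} (M : Matrix (Fin n) (Fin d) ℝ) :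
    frobNorm M = ‖toEuc M‖ := by
  rw [EuclideanSpace.norm_eq, frobNorm]
  congr 1
  rw [Fintype.sum_prod_type]
  simp [toEuc, Real.norm_eq_abs, sq_abs]

lemma frobNorm_nonneg {n d : ℕ} (M : Matrix (Fin n) (Fin d) ℝ) : 0 ≤ frobNorm M :=
  Real.sqrt_nonneg _

lemma frobNorm_sub_le {n d : ℕ} (M N : Matrix (Fin n) (Fin d) ℝ) :
    frobNorm (M - N) ≤ frobNorm M + frobNorm N := by
  rw [frobNorm_eq_norm, frobNorm_eq_norm, frobNorm_eq_norm, toEuc_sub]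
  exact norm_sub_le _ _

/-- Squared Frobenius norm as a trace. -/
lemma trace_transpose_mul_self {n d : ℕ} (M : Matrix (Fin n) (Fin d) ℝ) :
    (Mᵀ * M).trace = ∑ i, ∑ j, M i j ^ 2 := by
  rw [Matrix.trace, Finset.sum_comm]
  simp [Matrix.diag, Matrix.mul_apply, transpose_apply, sq]

lemma frobNorm_eq_sqrt_trace {n d : ℕ} (M : Matrix (Fin n) (Fin d) ℝ) :
    frobNorm M = Real.sqrt (Mᵀ * M).trace := by
  rw [frobNorm, trace_transpose_mul_self]

lemma trace_nonneg {n d : ℕ} (M : Matrix (Fin n) (Fin d) ℝ) : 0 ≤ (Mᵀ * M).trace := by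
  rw [trace_transpose_mul_self]
  positivity

lemma frobNorm_le_of_trace_le {n d : ℕ} (M N : Matrix (Fin n) (Fin d) ℝ)
    (h : (Mᵀ * M).trace ≤ (Nᵀ * N).trace) : frobNorm M ≤ frobNorm N := by
  rw [frobNorm_eq_sqrt_trace, frobNorm_eq_sqrt_trace]
  exact Real.sqrt_le_sqrt h

/-- Projection contraction for the Frobenius norm: trace version. -/
lemma trace_proj {n d : ℕ} (P : Matrix (Fin n) (Fin n) ℝ) (hPt : Pᵀ = P)
    (hPP : P * P = P) (M : Matrix (Fin n) (Fin d) ℝ) :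
    ((((1 : Matrix (Fin n) (Fin n) ℝ) - P) * M)ᵀ * (((1 : Matrix (Fin n) (Fin n) ℝ) - P) * M)).trace
      = (Mᵀ * M).trace - ((P * M)ᵀ * (P * M)).trace := by
  have h1 : ((1 : Matrix (Fin n) (Fin n) ℝ) - P)ᵀ * ((1 : Matrix (Fin n) (Fin n) ℝ) - P)
      = 1 - P := by
    rw [transpose_sub, transpose_one, hPt]
    rw [Matrix.sub_mul, Matrix.mul_sub, Matrix.mul_sub, hPP]
    noncomm_ring
  have h2 : (P * M)ᵀ * (P * M) = Mᵀ * (P * M) := by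
    rw [transpose_mul, hPt, Matrix.mul_assoc, ← Matrix.mul_assoc P, hPP]
  rw [transpose_mul, Matrix.mul_assoc, ← Matrix.mul_assoc _ _ M, h1, h2]
  rw [Matrix.sub_mul, Matrix.mul_sub, Matrix.one_mul, trace_sub]

lemma frobNorm_proj_le {n d : ℕ} (P : Matrix (Fin n) (Fin n) ℝ) (hPt : Pᵀ = P)
    (hPP : P * P = P) (M : Matrix (Fin n) (Fin d) ℝ) :
    frobNorm (((1 : Matrix (Fin n) (Fin n) ℝ) - P) * M) ≤ frobNorm M := by
  apply frobNorm_le_of_trace_le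
  rw [trace_proj P hPt hPP]
  have := trace_nonneg (P * M)
  linarith

end Aux
namespace Aux
lemma frobNorm_add_le {n d : ℕ} (M N : Matrix (Fin n) (Fin d) ℝ) :
    frobNorm (M + N) ≤ frobNorm M + frobNorm N := by
  rw [frobNorm_eq_norm, frobNorm_eq_norm, frobNorm_eq_norm, toEuc_add]
  exact norm_add_le _ _
end Aux
namespace Aux

lemma l2norm_nonneg {n : ℕ} (v : Fin n → ℝ) : 0 ≤ l2norm v := Real.sqrt_nonneg _

lemma l2norm_zero {n : ℕ} : l2norm (0 : Fin n → ℝ) = 0 := by simp [l2norm]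

lemma l2norm_sq {n : ℕ} (v : Fin n → ℝ) : l2norm v ^ 2 = ∑ i, v i ^ 2 := by
  rw [l2norm, Real.sq_sqrt]; positivity

/-- Cauchy–Schwarz: `‖Mv‖ ≤ ‖M‖_F ‖v‖`. -/
lemma l2norm_mulVec_le {n d : ℕ} (M : Matrix (Fin n) (Fin d) ℝ) (v : Fin d → ℝ) :
    l2norm (M.mulVec v) ≤ frobNorm M * l2norm v := by
  have h : ∀ i, (M.mulVec v) i ^ 2 ≤ (∑ j, M i j ^ 2) * (∑ j, v j ^ 2) := by
    intro i
    exact Finset.sum_mul_sq_le_sq_mul_sq Finset.univ (fun j => M i j) v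
  have h2 : ∑ i, (M.mulVec v) i ^ 2 ≤ (∑ i, ∑ j, M i j ^ 2) * (∑ j, v j ^ 2) := by
    rw [Finset.sum_mul]
    exact Finset.sum_le_sum fun i _ => h i
  calc l2norm (M.mulVec v) = Real.sqrt (∑ i, (M.mulVec v) i ^ 2) := rfl
    _ ≤ Real.sqrt ((∑ i, ∑ j, M i j ^ 2) * (∑ j, v j ^ 2)) := Real.sqrt_le_sqrt h2
    _ = frobNorm M * l2norm v := by rw [Real.sqrt_mul (by positivity)]; rfl

lemma specNorm_bddAbove {n d : ℕ} (M : Matrix (Fin n) (Fin d) ℝ) :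
    BddAbove {c : ℝ | ∃ v : Fin d → ℝ, l2norm v ≤ 1 ∧ c = l2norm (M.mulVec v)} := by
  refine ⟨frobNorm M, fun c hc => ?_⟩
  obtain ⟨v, hv, rfl⟩ := hc
  calc l2norm (M.mulVec v) ≤ frobNorm M * l2norm v := l2norm_mulVec_le M v
    _ ≤ frobNorm M * 1 := by
        exact mul_le_mul_of_nonneg_left hv (frobNorm_nonneg M)
    _ = frobNorm M := mul_one _

lemma l2norm_mulVec_le_specNorm {n d : ℕ} (M : Matrix (Fin n) (Fin d) ℝ)
    (v : Fin d → ℝ) (hv : l2norm v ≤ 1) : l2norm (M.mulVec v) ≤ specNorm M :=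
  le_csSup (specNorm_bddAbove M) ⟨v, hv, rfl⟩

lemma specNorm_nonneg {n d : ℕ} (M : Matrix (Fin n) (Fin d) ℝ) : 0 ≤ specNorm M := by
  have := l2norm_mulVec_le_specNorm M 0 (by rw [l2norm_zero]; norm_num)
  have h0 : M.mulVec 0 = 0 := Matrix.mulVec_zero M
  rw [h0, l2norm_zero] at this
  exact this

lemma l2norm_single {n : ℕ} (j : Fin n) : l2norm (Pi.single j (1:ℝ)) = 1 := by
  have : (∑ i, (Pi.single j (1:ℝ) : Fin n → ℝ) i ^ 2) = 1 := by
    rw [Finset.sum_eq_single j] <;> simp +contextual [Pi.single_apply]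
  rw [l2norm, this, Real.sqrt_one]

lemma frobNorm_le_sqrt_card_mul_specNorm {n d : ℕ} (M : Matrix (Fin n) (Fin d) ℝ) :
    frobNorm M ≤ Real.sqrt d * specNorm M := by
  have hcol : ∀ j, ∑ i, M i j ^ 2 ≤ specNorm M ^ 2 := by
    intro j
    have h := l2norm_mulVec_le_specNorm M (Pi.single j 1) (le_of_eq (l2norm_single j))
    have hsq := pow_le_pow_left₀ (l2norm_nonneg _) h 2
    rw [l2norm_sq] at hsq
    calc ∑ i, M i j ^ 2 = ∑ i, (M.mulVec (Pi.single j 1)) i ^ 2 := by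
          apply Finset.sum_congr rfl; intro i _
          simp [Matrix.mulVec_single]
      _ ≤ specNorm M ^ 2 := hsq
  have h2 : ∑ i, ∑ j, M i j ^ 2 ≤ d * specNorm M ^ 2 := by
    rw [Finset.sum_comm]
    calc ∑ j, ∑ i, M i j ^ 2 ≤ ∑ _j : Fin d, specNorm M ^ 2 :=
          Finset.sum_le_sum fun j _ => hcol j
      _ = d * specNorm M ^ 2 := by simp [mul_comm]
  calc frobNorm M = Real.sqrt (∑ i, ∑ j, M i j ^ 2) := rfl
    _ ≤ Real.sqrt (d * specNorm M ^ 2) := Real.sqrt_le_sqrt h2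
    _ = Real.sqrt d * specNorm M := by
        rw [Real.sqrt_mul (by positivity), Real.sqrt_sq (specNorm_nonneg M)]

end Aux
namespace Aux

lemma sum_castLE {n k : ℕ} (hk : k ≤ n) (f : Fin n → ℝ) :
    ∑ j : Fin k, f (Fin.castLE hk j) = ∑ a : Fin n, if (a : ℕ) < k then f a else 0 := by
  rw [Finset.sum_ite, Finset.sum_const_zero, add_zero]
  refine Finset.sum_bij' (i := fun (j : Fin k) (_ : j ∈ Finset.univ) => Fin.castLE hk j)
    (j := fun a ha => (⟨(a : ℕ), (Finset.mem_filter.1 ha).2⟩ : Fin k))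
    ?_ ?_ ?_ ?_ ?_ <;>
    simp +contextual [Fin.ext_iff]

lemma topCols_orth {n k : ℕ} (U : Matrix (Fin n) (Fin n) ℝ) (hk : k ≤ n)
    (hU : Uᵀ * U = 1) : (topCols U hk)ᵀ * topCols U hk = 1 := by
  ext j j'
  have h := congrFun (congrFun hU (Fin.castLE hk j)) (Fin.castLE hk j')
  simp only [Matrix.mul_apply, Matrix.transpose_apply, Matrix.one_apply] at h ⊢
  simp only [topCols, Matrix.of_apply]
  rw [h]
  simp [Fin.ext_iff]

/-- The rank-`k` truncation diagonal matrix. -/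
def Ek (n k : ℕ) : Matrix (Fin n) (Fin n) ℝ :=
  Matrix.diagonal (fun a => if (a : ℕ) < k then 1 else 0)

lemma topCols_mul_transpose {n k : ℕ} (U : Matrix (Fin n) (Fin n) ℝ) (hk : k ≤ n) :
    topCols U hk * (topCols U hk)ᵀ = U * Ek n k * Uᵀ := by
  ext i i'
  simp only [Matrix.mul_apply, Matrix.transpose_apply, topCols, Matrix.of_apply, Ek,
    Matrix.diagonal_apply]
  rw [sum_castLE hk (fun a => U i a * U i' a)]
  apply Finset.sum_congr rfl
  intro a _
  rw [Finset.sum_eq_single a]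
  · split <;> simp [mul_comm]
  · intro b _ hb; simp [hb]
  · simp

lemma sigMat_eq_diagonal {n : ℕ} (σ : ℕ → ℝ) :
    (Matrix.of fun (i : Fin n) (j : Fin n) => if (i : ℕ) = (j : ℕ) then σ (i : ℕ) else 0)
      = Matrix.diagonal (fun i : Fin n => σ (i : ℕ)) := by
  ext i j
  simp [Matrix.diagonal_apply, Fin.ext_iff]

end Aux
namespace Aux

lemma comb {n k : ℕ} (hk : k ≤ n) (lam c : Fin n → ℝ)
    (hmono : ∀ a b : Fin n, a ≤ b → lam b ≤ lam a) (hlam : ∀ a, 0 ≤ lam a)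
    (hc0 : ∀ a, 0 ≤ c a) (hc1 : ∀ a, c a ≤ 1) (hsum : ∑ a, c a ≤ k) :
    ∑ a, lam a * c a ≤ ∑ a : Fin n, if (a : ℕ) < k then lam a else 0 := by
  set B : ℝ := if h : k < n then lam ⟨k, h⟩ else 0 with hB
  have hB0 : 0 ≤ B := by rw [hB]; split <;> first | exact hlam _ | exact le_refl 0
  have hBlam : ∀ a : Fin n, (a : ℕ) < k → B ≤ lam a := by
    intro a ha
    rw [hB]
    split
    · next h => exact hmono a ⟨k, h⟩ (by simp [Fin.le_def]; omega)
    · exact hlam a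
  have hlamB : ∀ a : Fin n, k ≤ (a : ℕ) → lam a ≤ B := by
    intro a ha
    have hkn' : k < n := lt_of_le_of_lt ha a.is_lt
    rw [hB, dif_pos hkn']
    exact hmono ⟨k, hkn'⟩ a (by simp [Fin.le_def]; omega)
  have hcard : ∑ a : Fin n, (if (a : ℕ) < k then (1:ℝ) else 0) = k := by
    rw [← sum_castLE hk (fun _ => (1:ℝ))]
    simp
  set s : ℝ := ∑ a : Fin n, (if (a : ℕ) < k then c a else 0) with hs
  have hsplitc : ∑ a : Fin n, (if (a : ℕ) < k then (0:ℝ) else c a) = (∑ a, c a) - s := by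
    rw [hs, ← Finset.sum_sub_distrib]
    apply Finset.sum_congr rfl
    intro a _; split <;> ring
  have step1 : ∑ a : Fin n, (if (a : ℕ) < k then (0:ℝ) else lam a * c a) ≤ B * (k - s) := by
    calc ∑ a : Fin n, (if (a : ℕ) < k then (0:ℝ) else lam a * c a)
        ≤ ∑ a : Fin n, (if (a : ℕ) < k then (0:ℝ) else B * c a) := by
          apply Finset.sum_le_sum
          intro a _
          split
          · exact le_refl _
          · next h => exact mul_le_mul_of_nonneg_right (hlamB a (le_of_not_gt h)) (hc0 a)
      _ = B * ((∑ a, c a) - s) := by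
          rw [← hsplitc, Finset.mul_sum]
          apply Finset.sum_congr rfl
          intro a _; split <;> ring
      _ ≤ B * (k - s) := by
          apply mul_le_mul_of_nonneg_left _ hB0
          linarith
  have step2 : B * (k - s) ≤ ∑ a : Fin n, (if (a : ℕ) < k then lam a * (1 - c a) else 0) := by
    have hks : (k : ℝ) - s = ∑ a : Fin n, (if (a : ℕ) < k then 1 - c a else 0) := by
      rw [hs, ← hcard, ← Finset.sum_sub_distrib]
      apply Finset.sum_congr rfl
      intro a _; split <;> ring
    calc B * ((k : ℝ) - s) = ∑ a : Fin n, (if (a : ℕ) < k then B * (1 - c a) else 0) := by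
          rw [hks, Finset.mul_sum]
          apply Finset.sum_congr rfl
          intro a _; split <;> ring
      _ ≤ ∑ a : Fin n, (if (a : ℕ) < k then lam a * (1 - c a) else 0) := by
          apply Finset.sum_le_sum
          intro a _
          split
          · next h => exact mul_le_mul_of_nonneg_right (hBlam a h) (by linarith [hc1 a])
          · exact le_refl _
  have hdecomp : ∑ a, lam a * c a = ∑ a : Fin n, (if (a : ℕ) < k then lam a * c a else 0)
      + ∑ a : Fin n, (if (a : ℕ) < k then (0:ℝ) else lam a * c a) := by
    rw [← Finset.sum_add_distrib]
    apply Finset.sum_congr rfl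
    intro a _; split <;> ring
  have hfinal : ∑ a : Fin n, (if (a : ℕ) < k then lam a * c a else 0)
      + ∑ a : Fin n, (if (a : ℕ) < k then lam a * (1 - c a) else 0)
      = ∑ a : Fin n, if (a : ℕ) < k then lam a else 0 := by
    rw [← Finset.sum_add_distrib]
    apply Finset.sum_congr rfl
    intro a _; split <;> ring
  linarith

end Aux
namespace Aux

lemma diag_entry_nonneg {n m : ℕ} (X : Matrix (Fin n) (Fin m) ℝ) (a : Fin m) :
    0 ≤ (Xᵀ * X) a a := by
  rw [Matrix.mul_apply]
  apply Finset.sum_nonneg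
  intro i _
  simp only [Matrix.transpose_apply]
  exact mul_self_nonneg _

lemma kyFan {n k : ℕ} (hk : k ≤ n) (U : Matrix (Fin n) (Fin n) ℝ) (hU : Uᵀ * U = 1)
    (lam : Fin n → ℝ) (hmono : ∀ a b : Fin n, a ≤ b → lam b ≤ lam a)
    (hlam : ∀ a, 0 ≤ lam a)
    (Q : Matrix (Fin n) (Fin k) ℝ) (hQ : Qᵀ * Q = 1) :
    (Qᵀ * (U * Matrix.diagonal lam * Uᵀ) * Q).trace
      ≤ ∑ a : Fin n, if (a : ℕ) < k then lam a else 0 := by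
  set R : Matrix (Fin n) (Fin k) ℝ := Uᵀ * Q with hR
  set c : Fin n → ℝ := fun a => ∑ j, R a j ^ 2 with hc
  have hRt : Rᵀ = Qᵀ * U := by rw [hR, Matrix.transpose_mul, Matrix.transpose_transpose]
  -- trace identity
  have htr : (Qᵀ * (U * Matrix.diagonal lam * Uᵀ) * Q).trace = ∑ a, lam a * c a := by
    have : Qᵀ * (U * Matrix.diagonal lam * Uᵀ) * Q = Rᵀ * (Matrix.diagonal lam * R) := by
      rw [hRt, hR]
      simp only [Matrix.mul_assoc]
    rw [this, Matrix.trace]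
    rw [show ∀ (X : Matrix (Fin k) (Fin k) ℝ), X.diag = fun j => X j j from fun _ => rfl]
    rw [show (∑ j, (Rᵀ * (Matrix.diagonal lam * R)) j j) = ∑ j, ∑ a, R a j * (lam a * R a j) by
      apply Finset.sum_congr rfl; intro j _
      rw [Matrix.mul_apply]
      apply Finset.sum_congr rfl; intro a _
      rw [Matrix.transpose_apply, Matrix.diagonal_mul]]
    rw [Finset.sum_comm]
    apply Finset.sum_congr rfl; intro a _
    rw [hc, Finset.mul_sum]
    apply Finset.sum_congr rfl; intro j _
    ring
  have hc0 : ∀ a, 0 ≤ c a := by intro a; rw [hc]; positivity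
  have hRRt : ∀ a, (R * Rᵀ) a a = c a := by
    intro a
    rw [Matrix.mul_apply, hc]
    apply Finset.sum_congr rfl; intro j _
    rw [Matrix.transpose_apply]; ring
  have hc1 : ∀ a, c a ≤ 1 := by
    intro a
    have hG : ((1 - Q * Qᵀ) * U)ᵀ * ((1 - Q * Qᵀ) * U) = 1 - R * Rᵀ := by
      have hPt : (Q * Qᵀ)ᵀ = Q * Qᵀ := by
        rw [Matrix.transpose_mul, Matrix.transpose_transpose]
      have h1 : ((1 : Matrix (Fin n) (Fin n) ℝ) - Q * Qᵀ)ᵀ * (1 - Q * Qᵀ) = 1 - Q * Qᵀ := by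
        rw [Matrix.transpose_sub, Matrix.transpose_one, hPt]
        have hPP : (Q * Qᵀ) * (Q * Qᵀ) = Q * Qᵀ := by
          rw [Matrix.mul_assoc, ← Matrix.mul_assoc Qᵀ Q Qᵀ, hQ, Matrix.one_mul]
        rw [Matrix.sub_mul, Matrix.mul_sub, Matrix.mul_sub, hPP]
        noncomm_ring
      calc ((1 - Q * Qᵀ) * U)ᵀ * ((1 - Q * Qᵀ) * U)
          = Uᵀ * (((1 : Matrix (Fin n) (Fin n) ℝ) - Q * Qᵀ)ᵀ * (1 - Q * Qᵀ)) * U := by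
            rw [Matrix.transpose_mul]; simp only [Matrix.mul_assoc]
        _ = Uᵀ * (1 - Q * Qᵀ) * U := by rw [h1]
        _ = 1 - R * Rᵀ := by
            rw [Matrix.mul_sub, Matrix.sub_mul, Matrix.mul_one, hU, hR, hRt]
            simp only [Matrix.mul_assoc]
    have := diag_entry_nonneg ((1 - Q * Qᵀ) * U) a
    rw [hG] at this
    have h1a : ((1 : Matrix (Fin n) (Fin n) ℝ) - R * Rᵀ) a a = 1 - c a := by
      rw [Matrix.sub_apply, Matrix.one_apply_eq, hRRt]
    rw [h1a] at this
    linarith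
  have hsum : ∑ a, c a ≤ (k : ℝ) := by
    have h1 : ∑ a, c a = (R * Rᵀ).trace := by
      rw [Matrix.trace]
      exact (Finset.sum_congr rfl fun a _ => (hRRt a).symm)
    have h2 : (R * Rᵀ).trace = (Rᵀ * R).trace := Matrix.trace_mul_comm R Rᵀ
    have hUUt : U * Uᵀ = 1 := mul_eq_one_comm.mp hU
    have h3 : Rᵀ * R = Qᵀ * Q := by
      rw [hRt, hR, Matrix.mul_assoc, ← Matrix.mul_assoc U Uᵀ Q, hUUt, Matrix.one_mul]
    rw [h1, h2, h3, hQ, Matrix.trace_one]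
    simp
  rw [htr]
  exact comb hk lam c hmono hlam hc0 hc1 hsum

end Aux
namespace Aux

lemma fsq_unitary {n : ℕ} (U V M : Matrix (Fin n) (Fin n) ℝ)
    (hU : Uᵀ * U = 1) (hV : Vᵀ * V = 1) :
    ((U * M * Vᵀ)ᵀ * (U * M * Vᵀ)).trace = (Mᵀ * M).trace := by
  have h : (U * M * Vᵀ)ᵀ * (U * M * Vᵀ) = V * (Mᵀ * M) * Vᵀ := by
    calc (U * M * Vᵀ)ᵀ * (U * M * Vᵀ) = V * (Mᵀ * ((Uᵀ * U) * (M * Vᵀ))) := by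
          simp only [Matrix.transpose_mul, Matrix.transpose_transpose, Matrix.mul_assoc]
      _ = V * (Mᵀ * M) * Vᵀ := by rw [hU, Matrix.one_mul]; simp only [Matrix.mul_assoc]
  rw [h, Matrix.trace_mul_cycle, ← Matrix.mul_assoc, hV, Matrix.one_mul]

/-- `Ã − Ã_k = U D₁ Vᵀ` where `D₁` zeroes out the first `k` singular values. -/
lemma sub_rankApprox_eq {n k : ℕ} (hkn : k ≤ n) (A : Matrix (Fin n) (Fin n) ℝ)
    (U V : Matrix (Fin n) (Fin n) ℝ) (σ : ℕ → ℝ) (h : IsSVD A U V σ) :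
    A - rankApprox k A U hkn
      = U * Matrix.diagonal (fun a : Fin n => if (a : ℕ) < k then 0 else σ (a : ℕ)) * Vᵀ := by
  obtain ⟨hU, hV, _, _, _, hfact⟩ := h
  rw [sigMat_eq_diagonal] at hfact
  set S := Matrix.diagonal (fun i : Fin n => σ (i : ℕ)) with hS
  rw [rankApprox, topCols_mul_transpose, hfact]
  have h1 : U * Ek n k * Uᵀ * (U * S * Vᵀ) = U * (Ek n k * S) * Vᵀ := by
    calc U * Ek n k * Uᵀ * (U * S * Vᵀ) = U * (Ek n k * ((Uᵀ * U) * (S * Vᵀ))) := by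
          simp only [Matrix.mul_assoc]
      _ = U * (Ek n k * S) * Vᵀ := by rw [hU, Matrix.one_mul]; simp only [Matrix.mul_assoc]
  rw [h1, ← Matrix.sub_mul, ← Matrix.mul_sub]
  congr 1
  congr 1
  ext a b
  simp only [hS, Ek, Matrix.diagonal_mul_diagonal, Matrix.sub_apply, Matrix.diagonal_apply]
  split_ifs <;> simp_all

lemma trace_diag_sq {n : ℕ} (f : Fin n → ℝ) :
    ((Matrix.diagonal f)ᵀ * Matrix.diagonal f).trace = ∑ a, f a ^ 2 := by
  rw [Matrix.diagonal_transpose, Matrix.diagonal_mul_diagonal, Matrix.trace_diagonal]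
  apply Finset.sum_congr rfl
  intro a _; ring

/-- Eckart–Young for projections, given an SVD. -/
lemma eckartYoung {n k : ℕ} (hkn : k ≤ n) (A : Matrix (Fin n) (Fin n) ℝ)
    (U V : Matrix (Fin n) (Fin n) ℝ) (σ : ℕ → ℝ) (h : IsSVD A U V σ)
    (Q : Matrix (Fin n) (Fin k) ℝ) (hQ : Qᵀ * Q = 1) :
    frobNorm (A - rankApprox k A U hkn) ≤ frobNorm (A - Q * Qᵀ * A) := by
  obtain ⟨hU, hV, hord, hpos, hzero, hfact⟩ := h
  have hfact' : A = U * Matrix.diagonal (fun i : Fin n => σ (i : ℕ)) * Vᵀ := by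
    rw [hfact, sigMat_eq_diagonal]
  set lam : Fin n → ℝ := fun a => σ (a : ℕ) ^ 2 with hlamdef
  have hlam0 : ∀ a, 0 ≤ lam a := fun a => sq_nonneg _
  have hlammono : ∀ a b : Fin n, a ≤ b → lam b ≤ lam a := by
    intro a b hab
    exact pow_le_pow_left₀ (hpos _) (hord _ _ hab) 2
  -- the two sides as traces
  apply frobNorm_le_of_trace_le
  -- LHS trace
  have hLHS : ((A - rankApprox k A U hkn)ᵀ * (A - rankApprox k A U hkn)).trace
      = ∑ a : Fin n, if (a : ℕ) < k then 0 else lam a := by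
    rw [sub_rankApprox_eq hkn A U V σ ⟨hU, hV, hord, hpos, hzero, hfact⟩]
    rw [fsq_unitary U V _ hU hV, trace_diag_sq]
    apply Finset.sum_congr rfl
    intro a _; split <;> simp [hlamdef]
  -- RHS rewriting
  have hsub : A - Q * Qᵀ * A = ((1 : Matrix (Fin n) (Fin n) ℝ) - Q * Qᵀ) * A := by
    rw [Matrix.sub_mul, Matrix.one_mul]
  have hPt : (Q * Qᵀ)ᵀ = Q * Qᵀ := by
    rw [Matrix.transpose_mul, Matrix.transpose_transpose]
  have hPP : (Q * Qᵀ) * (Q * Qᵀ) = Q * Qᵀ := by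
    rw [Matrix.mul_assoc, ← Matrix.mul_assoc Qᵀ Q Qᵀ, hQ, Matrix.one_mul]
  have hRHS : ((A - Q * Qᵀ * A)ᵀ * (A - Q * Qᵀ * A)).trace
      = (Aᵀ * A).trace - ((Q * Qᵀ * A)ᵀ * (Q * Qᵀ * A)).trace := by
    rw [hsub, trace_proj _ hPt hPP]
  -- total energy
  have hA : (Aᵀ * A).trace = ∑ a, lam a := by
    rw [hfact', fsq_unitary U V _ hU hV, trace_diag_sq]
  -- projected energy bound via Ky Fan
  have hproj : ((Q * Qᵀ * A)ᵀ * (Q * Qᵀ * A)).trace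
      ≤ ∑ a : Fin n, if (a : ℕ) < k then lam a else 0 := by
    have hAAt : A * Aᵀ = U * Matrix.diagonal lam * Uᵀ := by
      rw [hfact']
      calc U * Matrix.diagonal (fun i : Fin n => σ (i : ℕ)) * Vᵀ *
            (U * Matrix.diagonal (fun i : Fin n => σ (i : ℕ)) * Vᵀ)ᵀ
          = U * (Matrix.diagonal (fun i : Fin n => σ (i : ℕ)) * ((Vᵀ * V)ᵀ *
              ((Matrix.diagonal (fun i : Fin n => σ (i : ℕ)))ᵀ * Uᵀ))) := by
            simp only [Matrix.transpose_mul, Matrix.transpose_transpose, Matrix.mul_assoc]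
      _ = U * Matrix.diagonal lam * Uᵀ := by
            have hdd : Matrix.diagonal (fun i : Fin n => σ (i : ℕ)) *
                Matrix.diagonal (fun i : Fin n => σ (i : ℕ)) = Matrix.diagonal lam := by
              rw [Matrix.diagonal_mul_diagonal]; congr 1; ext a; rw [hlamdef]; ring
            rw [hV, Matrix.transpose_one, Matrix.one_mul, Matrix.diagonal_transpose,
              ← Matrix.mul_assoc (Matrix.diagonal _) (Matrix.diagonal _) Uᵀ, hdd]
            simp only [Matrix.mul_assoc]
    have htr2 : ((Q * Qᵀ * A)ᵀ * (Q * Qᵀ * A)).trace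
        = (Qᵀ * (A * Aᵀ) * Q).trace := by
      have e1 : (Q * Qᵀ * A)ᵀ * (Q * Qᵀ * A) = Aᵀ * (Q * (Qᵀ * A)) := by
        calc (Q * Qᵀ * A)ᵀ * (Q * Qᵀ * A)
            = Aᵀ * (Q * ((Qᵀ * Q) * (Qᵀ * A))) := by
              simp only [Matrix.transpose_mul, Matrix.transpose_transpose, Matrix.mul_assoc]
          _ = Aᵀ * (Q * (Qᵀ * A)) := by rw [hQ, Matrix.one_mul]
      rw [e1]
      rw [show Aᵀ * (Q * (Qᵀ * A)) = (Aᵀ * Q) * (Qᵀ * A) by simp only [Matrix.mul_assoc]]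
      rw [Matrix.trace_mul_comm]
      congr 1
      simp only [Matrix.mul_assoc]
    rw [htr2, hAAt]
    exact kyFan hkn U hU lam hlammono hlam0 Q hQ
  have hsplit : (∑ a, lam a) = (∑ a : Fin n, if (a : ℕ) < k then lam a else 0)
      + (∑ a : Fin n, if (a : ℕ) < k then 0 else lam a) := by
    rw [← Finset.sum_add_distrib]
    apply Finset.sum_congr rfl
    intro a _; split <;> ring
  rw [hLHS, hRHS, hA]
  linarith

/-- `σ_k(A) ≤ ‖A − A_k‖_F`. -/
lemma sigma_le_frobNorm_tail {n k : ℕ} (hkn : k ≤ n) (A : Matrix (Fin n) (Fin n) ℝ)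
    (U V : Matrix (Fin n) (Fin n) ℝ) (σ : ℕ → ℝ) (h : IsSVD A U V σ) :
    σ k ≤ frobNorm (A - rankApprox k A U hkn) := by
  obtain ⟨hU, hV, hord, hpos, hzero, hfact⟩ := h
  rcases eq_or_lt_of_le hkn with heq | hlt
  · rw [hzero k (by omega)]
    exact frobNorm_nonneg _
  · have hLHS : ((A - rankApprox k A U hkn)ᵀ * (A - rankApprox k A U hkn)).trace
        = ∑ a : Fin n, if (a : ℕ) < k then 0 else σ (a : ℕ) ^ 2 := by
      rw [sub_rankApprox_eq hkn A U V σ ⟨hU, hV, hord, hpos, hzero, hfact⟩]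
      rw [fsq_unitary U V _ hU hV, trace_diag_sq]
      apply Finset.sum_congr rfl
      intro a _; split <;> simp
    have hk2 : σ k ^ 2 ≤ ∑ a : Fin n, if (a : ℕ) < k then 0 else σ (a : ℕ) ^ 2 := by
      have := Finset.single_le_sum (f := fun a : Fin n => if (a : ℕ) < k then 0 else σ (a : ℕ) ^ 2)
        (fun a _ => by split <;> positivity)
        (Finset.mem_univ (⟨k, hlt⟩ : Fin n))
      simpa using this
    rw [frobNorm_eq_sqrt_trace, hLHS]
    rw [show σ k = Real.sqrt (σ k ^ 2) by rw [Real.sqrt_sq (hpos k)]]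
    exact Real.sqrt_le_sqrt hk2

end Aux
/-- Lemma `lem:perturbed-correctness`, part 3: if `Ã = A + D` with
`‖D‖₂ ≤ (ε/(3n))·σ_{k+1}(A)` and `Q` has orthonormal columns, then a `(1+ε)` Frobenius norm
low-rank approximation guarantee for `Ã` implies a `(1+4ε)` guarantee for `A`. -/
theorem perturbed_frobenius_norm_guarantee (n k : ℕ) (hk : 1 ≤ k) (hkn : k ≤ n)
    (A D : Matrix (Fin n) (Fin n) ℝ) (ε : ℝ) (hε : ε ∈ Set.Ioo (0 : ℝ) 1)
    (UA VA : Matrix (Fin n) (Fin n) ℝ) (σA : ℕ → ℝ) (hA : IsSVD A UA VA σA)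
    (Ut Vt : Matrix (Fin n) (Fin n) ℝ) (σt : ℕ → ℝ) (ht : IsSVD (A + D) Ut Vt σt)
    (hD : specNorm D ≤ ε / (3 * n) * σA k)
    (Q : Matrix (Fin n) (Fin k) ℝ) (hQ : Qᵀ * Q = 1)
    (h : frobNorm ((A + D) - Q * Qᵀ * (A + D)) ≤
        (1 + ε) * frobNorm ((A + D) - rankApprox k (A + D) Ut hkn)) :
    frobNorm (A - Q * Qᵀ * A) ≤ (1 + 4 * ε) * frobNorm (A - rankApprox k A UA hkn) := by
  obtain ⟨hε0, hε1⟩ := hε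
  have hn : 1 ≤ n := le_trans hk hkn
  set a := frobNorm (A - rankApprox k A UA hkn) with ha
  set d := frobNorm D with hdd
  have ha0 : 0 ≤ a := Aux.frobNorm_nonneg _
  have hd0 : 0 ≤ d := Aux.frobNorm_nonneg _
  -- ‖D‖_F ≤ (ε/3) a
  have hσa : σA k ≤ a := Aux.sigma_le_frobNorm_tail hkn A UA VA σA hA
  have hσpos : 0 ≤ σA k := hA.2.2.2.1 k
  have hd : d ≤ ε / 3 * a := by
    have h1 : d ≤ Real.sqrt n * specNorm D := Aux.frobNorm_le_sqrt_card_mul_specNorm D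
    have h2 : Real.sqrt n * specNorm D ≤ Real.sqrt n * (ε / (3 * n) * σA k) :=
      mul_le_mul_of_nonneg_left hD (Real.sqrt_nonneg _)
    have hn' : (1 : ℝ) ≤ (n : ℝ) := by exact_mod_cast hn
    have hnpos : (0 : ℝ) < (n : ℝ) := by linarith
    have hn0 : (n : ℝ) ≠ 0 := ne_of_gt hnpos
    have hsn : Real.sqrt n ≤ (n : ℝ) := by
      have h3 : ((n : ℝ)) ≤ (n : ℝ) ^ 2 := by nlinarith
      calc Real.sqrt n ≤ Real.sqrt ((n : ℝ) ^ 2) := Real.sqrt_le_sqrt h3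
        _ = n := Real.sqrt_sq (by positivity)
    have h4 : Real.sqrt n * (ε / (3 * n) * σA k) ≤ ε / 3 * σA k := by
      have h5 : Real.sqrt n * (ε / (3 * n) * σA k) ≤ (n : ℝ) * (ε / (3 * n) * σA k) :=
        mul_le_mul_of_nonneg_right hsn (by positivity)
      have h6 : (n : ℝ) * (ε / (3 * n) * σA k) = ε / 3 * σA k := by
        field_simp
      linarith
    have h7 : ε / 3 * σA k ≤ ε / 3 * a := by
      apply mul_le_mul_of_nonneg_left hσa (by positivity)
    linarith
  -- orthonormality of topCols UA
  have hT : (topCols UA hkn)ᵀ * topCols UA hkn = 1 := Aux.topCols_orth UA hkn hA.1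
  set T := topCols UA hkn with hTdef
  have hPt : (Q * Qᵀ)ᵀ = Q * Qᵀ := by rw [Matrix.transpose_mul, Matrix.transpose_transpose]
  have hPP : (Q * Qᵀ) * (Q * Qᵀ) = Q * Qᵀ := by
    rw [Matrix.mul_assoc, ← Matrix.mul_assoc Qᵀ Q Qᵀ, hQ, Matrix.one_mul]
  have hTt : (T * Tᵀ)ᵀ = T * Tᵀ := by rw [Matrix.transpose_mul, Matrix.transpose_transpose]
  have hTT : (T * Tᵀ) * (T * Tᵀ) = T * Tᵀ := by
    rw [Matrix.mul_assoc, ← Matrix.mul_assoc Tᵀ T Tᵀ, hT, Matrix.one_mul]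
  -- Step 1: ‖A − QQᵀA‖ ≤ ‖Ã − QQᵀÃ‖ + d
  have key1 : frobNorm (A - Q * Qᵀ * A)
      ≤ frobNorm ((A + D) - Q * Qᵀ * (A + D)) + d := by
    have e1 : A - Q * Qᵀ * A
        = ((A + D) - Q * Qᵀ * (A + D)) - ((1 - Q * Qᵀ) * D) := by
      rw [Matrix.sub_mul, Matrix.one_mul, Matrix.mul_add]
      abel
    rw [e1]
    calc frobNorm (((A + D) - Q * Qᵀ * (A + D)) - ((1 - Q * Qᵀ) * D))
        ≤ frobNorm ((A + D) - Q * Qᵀ * (A + D)) + frobNorm ((1 - Q * Qᵀ) * D) :=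
          Aux.frobNorm_sub_le _ _
      _ ≤ frobNorm ((A + D) - Q * Qᵀ * (A + D)) + d := by
          have := Aux.frobNorm_proj_le (Q * Qᵀ) hPt hPP D
          linarith
  -- Step 2: ‖Ã − Ã_k‖ ≤ a + d
  have key3 : frobNorm ((A + D) - rankApprox k (A + D) Ut hkn) ≤ a + d := by
    have hEY : frobNorm ((A + D) - rankApprox k (A + D) Ut hkn)
        ≤ frobNorm ((A + D) - T * Tᵀ * (A + D)) :=
      Aux.eckartYoung hkn (A + D) Ut Vt σt ht T hT
    have e2 : (A + D) - T * Tᵀ * (A + D)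
        = (A - rankApprox k A UA hkn) + ((1 - T * Tᵀ) * D) := by
      rw [rankApprox, ← hTdef, Matrix.sub_mul, Matrix.one_mul, Matrix.mul_add]
      abel
    calc frobNorm ((A + D) - rankApprox k (A + D) Ut hkn)
        ≤ frobNorm ((A + D) - T * Tᵀ * (A + D)) := hEY
      _ = frobNorm ((A - rankApprox k A UA hkn) + ((1 - T * Tᵀ) * D)) := by rw [e2]
      _ ≤ a + frobNorm ((1 - T * Tᵀ) * D) := by
          have := Aux.frobNorm_add_le (A - rankApprox k A UA hkn) ((1 - T * Tᵀ) * D)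
          rw [← ha] at this
          exact this
      _ ≤ a + d := by
          have := Aux.frobNorm_proj_le (T * Tᵀ) hTt hTT D
          linarith
  -- combine
  have hmain : frobNorm (A - Q * Qᵀ * A) ≤ (1 + ε) * (a + d) + d := by
    calc frobNorm (A - Q * Qᵀ * A)
        ≤ frobNorm ((A + D) - Q * Qᵀ * (A + D)) + d := key1
      _ ≤ (1 + ε) * frobNorm ((A + D) - rankApprox k (A + D) Ut hkn) + d := by linarith
      _ ≤ (1 + ε) * (a + d) + d := by nlinarith
  nlinarith

end
end

section
/- Let A ∈ ℝ^{n×n} with top k left singular vectors U_k ∈ ℝ^{n×k}, and let B ∈ ℝ^{n×ℓ}. Then B is a (k,L)-good starting matrix for A in the generalized sense (i.e., there exists an orthonormal Q ∈ ℝ^{n×k} whose columns lie in the column span of B with U_kᵀQ invertible and ‖(U_kᵀQ)^{−1}‖_2² ≤ L) if and only if there exists a matrix M ∈ ℝ^{ℓ×k} with U_kᵀBM = I_k and ‖BM‖_2² ≤ L. -/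
open MeasureTheory ProbabilityTheory Matrix

noncomputable section

lemma l2norm_mulVec_orth {n k : ℕ} (Q : Matrix (Fin n) (Fin k) ℝ) (h : Qᵀ * Q = 1)
    (w : Fin k → ℝ) : l2norm (Q.mulVec w) = l2norm w := by
  unfold l2norm
  congr 1
  have h1 : ∀ m (v : Fin m → ℝ), ∑ i, v i ^ 2 = v ⬝ᵥ v := by
    intro m v; simp [dotProduct, pow_two]
  rw [h1, h1, dotProduct_mulVec, ← Matrix.transpose_transpose Q, Matrix.vecMul_transpose,
    Matrix.transpose_transpose, Matrix.mulVec_mulVec, h, Matrix.one_mulVec]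

lemma specNorm_mul_orth {n k d : ℕ} (Q : Matrix (Fin n) (Fin k) ℝ) (h : Qᵀ * Q = 1)
    (X : Matrix (Fin k) (Fin d) ℝ) : specNorm (Q * X) = specNorm X := by
  unfold specNorm
  congr 1
  ext c
  constructor
  · rintro ⟨v, hv, rfl⟩
    exact ⟨v, hv, by rw [← Matrix.mulVec_mulVec, l2norm_mulVec_orth Q h]⟩
  · rintro ⟨v, hv, rfl⟩
    exact ⟨v, hv, by rw [← Matrix.mulVec_mulVec, l2norm_mulVec_orth Q h]⟩

lemma mem_colSpan_iff {n l : ℕ} (B : Matrix (Fin n) (Fin l) ℝ) (v : Fin n → ℝ) :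
    v ∈ colSpan B ↔ ∃ c : Fin l → ℝ, B.mulVec c = v := by
  have : colSpan B = LinearMap.range B.mulVecLin := by
    rw [Matrix.range_mulVecLin]
    rfl
  rw [this]
  exact Iff.rfl

theorem generalized_good_start_iff' (n l k : ℕ) (hkn : k ≤ n)
    (B : Matrix (Fin n) (Fin l) ℝ) (L : ℝ) (Uk : Matrix (Fin n) (Fin k) ℝ) :
    (∃ Q : Matrix (Fin n) (Fin k) ℝ, Qᵀ * Q = 1 ∧
      (∀ j : Fin k, (fun i => Q i j) ∈ colSpan B) ∧
      IsUnit (Ukᵀ * Q) ∧ specNorm ((Ukᵀ * Q)⁻¹) ^ 2 ≤ L) ↔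
      ∃ M : Matrix (Fin l) (Fin k) ℝ,
        Ukᵀ * (B * M) = 1 ∧ specNorm (B * M) ^ 2 ≤ L := by
  constructor
  · rintro ⟨Q, hQ, hcol, hunit, hL⟩
    choose c hc using fun j => (mem_colSpan_iff B _).mp (hcol j)
    have hBC : B * (Matrix.of fun i j => c j i) = Q := by
      ext i j
      rw [← congrFun (hc j) i]
      simp [Matrix.mul_apply, Matrix.mulVec, dotProduct]
    have hdet : IsUnit (Ukᵀ * Q).det := (Matrix.isUnit_iff_isUnit_det _).mp hunit
    refine ⟨(Matrix.of fun i j => c j i) * (Ukᵀ * Q)⁻¹, ?_, ?_⟩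
    · rw [← Matrix.mul_assoc, ← Matrix.mul_assoc, Matrix.mul_assoc Ukᵀ B _, hBC,
        Matrix.mul_nonsing_inv _ hdet]
    · rw [← Matrix.mul_assoc, hBC, specNorm_mul_orth Q hQ]
      exact hL
  · rintro ⟨M, hM1, hM2⟩
    have hGsd : ((B * M)ᵀ * (B * M)).PosSemidef := by
      have := Matrix.posSemidef_conjTranspose_mul_self (B * M)
      rwa [Matrix.conjTranspose_eq_transpose_of_trivial] at this
    have hGpd : ((B * M)ᵀ * (B * M)).PosDef := by
      refine Matrix.PosDef.of_dotProduct_mulVec_pos hGsd.1 fun x hx => ?_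
      have hPx : (B * M).mulVec x ≠ 0 := by
        intro h0
        apply hx
        have h2 : (Ukᵀ * (B * M)).mulVec x = Ukᵀ.mulVec ((B * M).mulVec x) := by
          rw [Matrix.mulVec_mulVec]
        rw [hM1] at h2
        simpa [h0] using h2
      have h3 : star x ⬝ᵥ ((B * M)ᵀ * (B * M)) *ᵥ x = ((B * M) *ᵥ x) ⬝ᵥ ((B * M) *ᵥ x) := by
        rw [star_trivial, ← Matrix.mulVec_mulVec, dotProduct_mulVec, Matrix.vecMul_transpose]
      rw [h3]
      rcases lt_or_eq_of_le (Finset.sum_nonneg fun i _ => mul_self_nonneg (((B * M) *ᵥ x) i)) with h | h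
      · exact h
      · exact absurd (dotProduct_self_eq_zero.mp h.symm) hPx
    obtain ⟨S, hSsd, hSS⟩ : ∃ S : Matrix (Fin k) (Fin k) ℝ, S.PosSemidef ∧
        S * S = (B * M)ᵀ * (B * M) :=
      by open scoped MatrixOrder in exact ⟨CFC.sqrt _, (CFC.sqrt_nonneg _).posSemidef, CFC.sqrt_mul_sqrt_self _ hGsd.nonneg⟩
    have hSH : Sᵀ = S := by
      have := hSsd.1
      rwa [Matrix.IsHermitian, Matrix.conjTranspose_eq_transpose_of_trivial] at this
    have hSdet : IsUnit S.det := by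
      have hGu : IsUnit (((B * M)ᵀ * (B * M))).det := (Matrix.isUnit_iff_isUnit_det _).mp hGpd.isUnit
      rw [← hSS, Matrix.det_mul] at hGu
      exact isUnit_of_mul_isUnit_left hGu
    have hSi : S * S⁻¹ = 1 := Matrix.mul_nonsing_inv _ hSdet
    have hSi' : S⁻¹ * S = 1 := Matrix.nonsing_inv_mul _ hSdet
    have hiT : (S⁻¹)ᵀ = S⁻¹ := by rw [Matrix.transpose_nonsing_inv, hSH]
    have e1 : (B * M)ᵀ * ((B * M) * S⁻¹) = S := by
      rw [← Matrix.mul_assoc, ← hSS, Matrix.mul_assoc, hSi, Matrix.mul_one]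
    have hQQ : ((B * M) * S⁻¹)ᵀ * ((B * M) * S⁻¹) = 1 := by
      rw [Matrix.transpose_mul, hiT, Matrix.mul_assoc, e1, hSi']
    have hUQ : Ukᵀ * ((B * M) * S⁻¹) = S⁻¹ := by
      rw [← Matrix.mul_assoc, hM1, Matrix.one_mul]
    have hQS : ((B * M) * S⁻¹) * S = B * M := by
      rw [Matrix.mul_assoc, hSi', Matrix.mul_one]
    refine ⟨(B * M) * S⁻¹, hQQ, ?_, ?_, ?_⟩
    · intro j
      rw [mem_colSpan_iff]
      refine ⟨fun x => (M * S⁻¹) x j, ?_⟩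
      ext i
      simp only [Matrix.mul_assoc, Matrix.mulVec, Matrix.mul_apply, dotProduct, Finset.sum_mul,
        Finset.mul_sum]
      rw [Finset.sum_comm]
      simp [mul_assoc]
    · rw [hUQ, Matrix.isUnit_nonsing_inv_iff]
      exact (Matrix.isUnit_iff_isUnit_det _).mpr hSdet
    · rw [hUQ, Matrix.nonsing_inv_nonsing_inv _ hSdet]
      have : specNorm S = specNorm (B * M) := by
        rw [← specNorm_mul_orth ((B * M) * S⁻¹) hQQ S, hQS]
      rw [this]
      exact hM2


/-- Lemma `lem:generalized-l-good-equiv`: `B ∈ ℝ^{n×ℓ}` is a generalized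
`(k,L)`-good starting matrix for `A` if and only if there is `M ∈ ℝ^{ℓ×k}` with
`U_kᵀ B M = I_k` and `‖BM‖₂² ≤ L`. -/
theorem generalized_good_start_iff (n l k : ℕ) (hkn : k ≤ n)
    (A U V : Matrix (Fin n) (Fin n) ℝ) (σ : ℕ → ℝ) (hsvd : IsSVD A U V σ)
    (B : Matrix (Fin n) (Fin l) ℝ) (L : ℝ) :
    IsGoodStartGen (topCols U hkn) B L ↔
      ∃ M : Matrix (Fin l) (Fin k) ℝ,
        (topCols U hkn)ᵀ * (B * M) = 1 ∧ specNorm (B * M) ^ 2 ≤ L :=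
  generalized_good_start_iff' n l k hkn B L (topCols U hkn)

end
end
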